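/- Let 𝒯 be a pretriangulated category, A a subring of ℚ, f : X → Y a morphism of 𝒯, and X →f Y → C → X[1] a distinguished triangle on f. Then f is an A-isogeny if and only if C is an A-torsion object. In particular, for any object X and any nonzero integer n invertible in A, the cone of the morphism n • 𝟙_X : X → X is A-torsion (indeed it is killed by n²). -/

import Mathlib

/-!
If `f ≫ q = n • 𝟙` and `q ≫ f = n • 𝟙`, then `n` kills both `g` and `h` (because `f ≫ g = 0`
and `h ≫ f⟦1⟧' = 0`); since `n • 𝟙 Z` composed with `h` vanishes it factors through `g`, so
`n² • 𝟙 Z = 0`. Conversely, if `n • 𝟙 Z = 0`, the long exact sequences of the triangle give a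
left and a right `n`-inverse of `f`, and any two such agree after multiplying by `n`, which
yields an `n²`-inverse on both sides. Applied to `n • 𝟙 X` with `q = 𝟙 X` this gives the last part.
-/

open CategoryTheory Limits Pretriangulated

/-- An object `X` is `A`-torsion if `n • 𝟙 X = 0` for some nonzero integer `n`
invertible in `A`. -/
def IsATorsion (A : Subring ℚ) {C : Type*} [Category C] [Preadditive C] (X : C) : Prop :=
  ∃ n : ℤ, n ≠ 0 ∧ IsUnit (n : A) ∧ (n : ℤ) • 𝟙 X = 0

/-- `f : X ⟶ Y` is an `A`-isogeny if there are `g : Y ⟶ X` and a nonzero integer `n`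
invertible in `A` with `f ≫ g = n • 𝟙 X` and `g ≫ f = n • 𝟙 Y`. -/
def IsAIsogeny (A : Subring ℚ) {C : Type*} [Category C] [Preadditive C]
    {X Y : C} (f : X ⟶ Y) : Prop :=
  ∃ (g : Y ⟶ X) (n : ℤ), n ≠ 0 ∧ IsUnit (n : A) ∧
    f ≫ g = (n : ℤ) • 𝟙 X ∧ g ≫ f = (n : ℤ) • 𝟙 Y

open Preadditive

lemma isUnit_intCast_sq {R : Type*} [Ring R] {n : ℤ} (h : IsUnit (n : R)) :
    IsUnit ((n ^ 2 : ℤ) : R) := by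
  rw [Int.cast_pow]
  exact h.pow 2

section Preadditive

variable {C : Type*} [Category C] [Preadditive C]

lemma zsmul_eq_zero_of_zsmul_id_source_eq_zero {X Y : C} {n : ℤ} (hX : n • 𝟙 X = 0)
    (φ : X ⟶ Y) : n • φ = 0 := by
  rw [← Category.id_comp φ, ← zsmul_comp, hX, zero_comp]

lemma zsmul_eq_zero_of_zsmul_id_target_eq_zero {X Y : C} {n : ℤ} (hY : n • 𝟙 Y = 0)
    (φ : X ⟶ Y) : n • φ = 0 := by
  rw [← Category.comp_id φ, ← comp_zsmul, hY, comp_zero]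

lemma CategoryTheory.Functor.zsmul_id_obj_eq_zero {D : Type*} [Category D] [Preadditive D]
    (F : C ⥤ D) [F.Additive] {X : C} {n : ℤ} (hX : n • 𝟙 X = 0) : n • 𝟙 (F.obj X) = 0 := by
  rw [← F.map_id, ← F.map_zsmul, hX, F.map_zero]

lemma exists_comp_eq_sq_zsmul_id {X Y : C} {f : X ⟶ Y} {q₁ q₂ : Y ⟶ X} {n : ℤ}
    (h₁ : f ≫ q₁ = n • 𝟙 X) (h₂ : q₂ ≫ f = n • 𝟙 Y) :
    ∃ q : Y ⟶ X, f ≫ q = (n ^ 2) • 𝟙 X ∧ q ≫ f = (n ^ 2) • 𝟙 Y := by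
  have hq : n • q₁ = n • q₂ :=
    calc n • q₁ = (q₂ ≫ f) ≫ q₁ := by rw [h₂, zsmul_comp, Category.id_comp]
      _ = q₂ ≫ f ≫ q₁ := Category.assoc _ _ _
      _ = n • q₂ := by rw [h₁, comp_zsmul, Category.comp_id]
  refine ⟨n • q₁, ?_, ?_⟩
  · rw [comp_zsmul, h₁, smul_smul, sq]
  · rw [hq, zsmul_comp, h₂, smul_smul, sq]

lemma isATorsion_of_sq_zsmul_id_eq_zero (A : Subring ℚ) {X : C} {n : ℤ} (hn : n ≠ 0)
    (hnA : IsUnit (n : A)) (hX : (n ^ 2) • 𝟙 X = 0) : IsATorsion A X :=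
  ⟨n ^ 2, pow_ne_zero 2 hn, isUnit_intCast_sq hnA, hX⟩

lemma isAIsogeny_of_comp_eq_zsmul_id (A : Subring ℚ) {X Y : C} {f : X ⟶ Y} {q₁ q₂ : Y ⟶ X}
    {n : ℤ} (hn : n ≠ 0) (hnA : IsUnit (n : A)) (h₁ : f ≫ q₁ = n • 𝟙 X)
    (h₂ : q₂ ≫ f = n • 𝟙 Y) : IsAIsogeny A f := by
  obtain ⟨q, hfq, hqf⟩ := exists_comp_eq_sq_zsmul_id h₁ h₂
  exact ⟨q, n ^ 2, pow_ne_zero 2 hn, isUnit_intCast_sq hnA, hfq, hqf⟩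

end Preadditive

namespace CategoryTheory.Pretriangulated.Triangle

variable {C : Type*} [Category C] [HasZeroObject C] [Preadditive C] [HasShift C ℤ]
  [∀ n : ℤ, (CategoryTheory.shiftFunctor C n).Additive] [Pretriangulated C]
  (T : Triangle C) (hT : T ∈ distTriang C)
include hT

lemma mul_zsmul_id_obj₃_eq_zero {m n : ℤ} (h₂ : m • T.mor₂ = 0) (h₃ : n • T.mor₃ = 0) :
    (m * n) • 𝟙 T.obj₃ = 0 := by
  obtain ⟨p, hp⟩ := coyoneda_exact₃ T hT (n • 𝟙 T.obj₃) <| by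
    rw [zsmul_comp, Category.id_comp, h₃]
  rw [mul_smul, hp, ← comp_zsmul, h₂, comp_zero]

lemma sq_zsmul_id_obj₃_eq_zero {q : T.obj₂ ⟶ T.obj₁} {n : ℤ}
    (h₁ : T.mor₁ ≫ q = n • 𝟙 T.obj₁) (h₂ : q ≫ T.mor₁ = n • 𝟙 T.obj₂) : (n ^ 2) • 𝟙 T.obj₃ = 0 := by
  rw [sq]
  apply mul_zsmul_id_obj₃_eq_zero T hT
  · calc n • T.mor₂ = (q ≫ T.mor₁) ≫ T.mor₂ := by rw [h₂, zsmul_comp, Category.id_comp]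
      _ = 0 := by rw [Category.assoc, comp_distTriang_mor_zero₁₂ _ hT, comp_zero]
  · calc n • T.mor₃ = T.mor₃ ≫ (T.mor₁ ≫ q)⟦(1 : ℤ)⟧' := by
          rw [h₁, Functor.map_zsmul, Functor.map_id, comp_zsmul, Category.comp_id]
      _ = 0 := by
          rw [Functor.map_comp, ← Category.assoc, comp_distTriang_mor_zero₃₁ _ hT, zero_comp]

lemma exists_mor₁_comp_eq_zsmul_id {n : ℤ} (hn : n • 𝟙 T.obj₃ = 0) :
    ∃ q : T.obj₂ ⟶ T.obj₁, T.mor₁ ≫ q = n • 𝟙 T.obj₁ := by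
  have hf : T.invRotate.mor₁ ≫ (n • 𝟙 T.invRotate.obj₂) = 0 := by
    rw [comp_zsmul, Category.comp_id]
    exact zsmul_eq_zero_of_zsmul_id_source_eq_zero
      ((CategoryTheory.shiftFunctor C (-1 : ℤ)).zsmul_id_obj_eq_zero hn) _
  -- exactness at `T.obj₁` is exactness in the middle of `T.obj₃⟦-1⟧ ⟶ T.obj₁ ⟶ T.obj₂`
  obtain ⟨q, hq⟩ := yoneda_exact₂ _ (inv_rot_of_distTriang T hT) _ hf
  exact ⟨q, hq.symm⟩

lemma exists_comp_mor₁_eq_zsmul_id {n : ℤ} (hn : n • 𝟙 T.obj₃ = 0) :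
    ∃ q : T.obj₂ ⟶ T.obj₁, q ≫ T.mor₁ = n • 𝟙 T.obj₂ := by
  obtain ⟨q, hq⟩ := coyoneda_exact₂ T hT (n • 𝟙 T.obj₂) <| by
    rw [zsmul_comp, Category.id_comp]
    exact zsmul_eq_zero_of_zsmul_id_target_eq_zero hn _
  exact ⟨q, hq.symm⟩

end CategoryTheory.Pretriangulated.Triangle

/-- Proposition B.2.1 b) and d): given a distinguished triangle `X →f Y → C → X[1]`,
`f` is an `A`-isogeny iff `C` is `A`-torsion; and the cone of `n • 𝟙 X` is `A`-torsion,
indeed killed by `n²`. -/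
theorem stmt_3 (A : Subring ℚ) {C : Type*} [Category C]
    [HasZeroObject C] [Preadditive C] [HasShift C ℤ]
    [∀ n : ℤ, (CategoryTheory.shiftFunctor C n).Additive] [Pretriangulated C] :
    (∀ (X Y Z : C) (f : X ⟶ Y) (g : Y ⟶ Z) (h : Z ⟶ X⟦(1 : ℤ)⟧),
        Triangle.mk f g h ∈ (distTriang C) → (IsAIsogeny A f ↔ IsATorsion A Z)) ∧
    (∀ (X Z : C) (n : ℤ), n ≠ 0 → IsUnit (n : A) →
        ∀ (g : X ⟶ Z) (h : Z ⟶ X⟦(1 : ℤ)⟧),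
        Triangle.mk ((n : ℤ) • 𝟙 X) g h ∈ (distTriang C) →
        IsATorsion A Z ∧ (n ^ 2 : ℤ) • 𝟙 Z = 0) := by
  refine ⟨fun X Y Z f g h hT => ⟨?_, ?_⟩, fun X Z n hn hnA g h hT => ?_⟩
  · rintro ⟨q, n, hn, hnA, hfq, hqf⟩
    exact isATorsion_of_sq_zsmul_id_eq_zero A hn hnA
      (Triangle.sq_zsmul_id_obj₃_eq_zero _ hT hfq hqf)
  · rintro ⟨n, hn, hnA, hZ⟩
    obtain ⟨q₁, h₁⟩ := Triangle.exists_mor₁_comp_eq_zsmul_id _ hT hZ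
    obtain ⟨q₂, h₂⟩ := Triangle.exists_comp_mor₁_eq_zsmul_id _ hT hZ
    exact isAIsogeny_of_comp_eq_zsmul_id A hn hnA h₁ h₂
  · have hZ : (n ^ 2) • 𝟙 Z = 0 :=
      Triangle.sq_zsmul_id_obj₃_eq_zero _ hT (q := 𝟙 X) (Category.comp_id _)
        (Category.id_comp _)
    exact ⟨isATorsion_of_sq_zsmul_id_eq_zero A hn hnA hZ, hZ⟩
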